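/- arXiv:1507.04413 — 13 statements merged into one kernel-verified Lean document; each statement's English description precedes it below -/
import Mathlib

section
/- A topological space G is rectifiable if and only if there exist an element e ∈ G and two continuous maps p : G × G → G and q : G × G → G such that for all x, y ∈ G, p(x, q(x,y)) = y, q(x, p(x,y)) = y, and q(x,x) = e. -/
/-- A topological space `G` is rectifiable (there exist a homeomorphism
`φ : G × G ≃ₜ G × G` and `e ∈ G` with `(φ z).1 = z.1` and `φ (x, x) = (x, e)`)
iff there exist `e ∈ G` and continuous maps `p q : G × G → G` with
`p (x, q (x, y)) = y`, `q (x, p (x, y)) = y` and `q (x, x) = e`. -/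
theorem rectifiable_iff_exists_p_q (G : Type*) [TopologicalSpace G] :
    (∃ (φ : G × G ≃ₜ G × G) (e : G),
      (∀ z : G × G, (φ z).1 = z.1) ∧ (∀ x : G, φ (x, x) = (x, e))) ↔
    (∃ (e : G) (p q : G × G → G), Continuous p ∧ Continuous q ∧
      (∀ x y : G, p (x, q (x, y)) = y) ∧
      (∀ x y : G, q (x, p (x, y)) = y) ∧
      (∀ x : G, q (x, x) = e)) := by
  constructor
  · rintro ⟨φ, e, h1, h2⟩
    refine ⟨e, fun z => (φ.symm z).2, fun z => (φ z).2,
      φ.symm.continuous.snd, φ.continuous.snd, ?_, ?_, ?_⟩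
    · intro x y
      have hx : (φ (x, y)).1 = x := h1 (x, y)
      have h : ((φ (x, y)).1, (φ (x, y)).2) = φ (x, y) := rfl
      rw [hx] at h
      show (φ.symm (x, (φ (x, y)).2)).2 = y
      rw [h, φ.symm_apply_apply]
    · intro x y
      have hx : (φ.symm (x, y)).1 = x := by
        have := h1 (φ.symm (x, y))
        rw [φ.apply_symm_apply] at this
        exact this.symm
      have h : ((φ.symm (x, y)).1, (φ.symm (x, y)).2) = φ.symm (x, y) := rfl
      rw [hx] at h
      show (φ (x, (φ.symm (x, y)).2)).2 = y
      rw [h, φ.apply_symm_apply]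
    · intro x
      show (φ (x, x)).2 = e
      rw [h2 x]
  · rintro ⟨e, p, q, hp, hq, hpq, hqp, hqe⟩
    refine ⟨⟨⟨fun z => (z.1, q z), fun z => (z.1, p z), ?_, ?_⟩, ?_, ?_⟩, e, ?_, ?_⟩
    · rintro ⟨a, b⟩
      simp [hpq]
    · rintro ⟨a, b⟩
      simp [hqp]
    · exact continuous_fst.prodMk hq
    · exact continuous_fst.prodMk hp
    · intro z; rfl
    · intro x
      simp [hqe]
end

section
/- If A is a subset of a rectifiable space G, then H = ⋃_{n∈ℕ} (Aₙ ∪ Bₙ) is the smallest rectifiable subspace of G containing A, where A₁ = A, B₁ = q(A,{e}) ∪ q(A,A), and for each n, A_{n+1} = p(Aₙ ∪ Bₙ, Aₙ ∪ Bₙ) and B_{n+1} = q(Aₙ ∪ Bₙ, Aₙ ∪ Bₙ). Moreover, H is open in G whenever A is open in G. -/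
/-- The smallest rectifiable subspace containing a set `A`. -/
theorem smallest_rectifiable_subspace_containing
    {G : Type*} [TopologicalSpace G] (e : G) (p q : G × G → G)
    (hp : Continuous p) (hq : Continuous q)
    (hpq : ∀ x y : G, p (x, q (x, y)) = y)
    (hqp : ∀ x y : G, q (x, p (x, y)) = y)
    (hqe : ∀ x : G, q (x, x) = e)
    (A₀ : Set G) (A B : ℕ → Set G)
    (hA0 : A 0 = A₀)
    (hB0 : B 0 = q '' (A₀ ×ˢ {e}) ∪ q '' (A₀ ×ˢ A₀))
    (hA : ∀ n, A (n + 1) = p '' ((A n ∪ B n) ×ˢ (A n ∪ B n)))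
    (hB : ∀ n, B (n + 1) = q '' ((A n ∪ B n) ×ˢ (A n ∪ B n))) :
    (p '' ((⋃ n, A n ∪ B n) ×ˢ (⋃ n, A n ∪ B n)) ⊆ ⋃ n, A n ∪ B n) ∧
    (q '' ((⋃ n, A n ∪ B n) ×ˢ (⋃ n, A n ∪ B n)) ⊆ ⋃ n, A n ∪ B n) ∧
    A₀ ⊆ ⋃ n, A n ∪ B n ∧
    (∀ S : Set G, p '' (S ×ˢ S) ⊆ S → q '' (S ×ˢ S) ⊆ S → A₀ ⊆ S →
      (⋃ n, A n ∪ B n) ⊆ S) ∧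
    (IsOpen A₀ → IsOpen (⋃ n, A n ∪ B n)) := by
  have hpe : ∀ x : G, p (x, e) = x := fun x => by rw [← hqe x]; exact hpq x x
  rcases A₀.eq_empty_or_nonempty with hemp | ⟨a₀, ha₀⟩
  · -- empty case: all levels are empty
    have hCe : ∀ n, A n ∪ B n = ∅ := by
      intro n
      induction n with
      | zero => simp [hA0, hB0, hemp]
      | succ n ih => simp [hA n, hB n, ih]
    have hU : (⋃ n, A n ∪ B n) = ∅ := by simp [hCe]
    rw [hU]
    refine ⟨by simp, by simp, by rw [hemp], fun S _ _ _ => by simp, fun _ => isOpen_empty⟩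
  · -- nonempty case
    have heC : ∀ n, e ∈ A n ∪ B n := by
      intro n
      induction n with
      | zero => exact Or.inr (hB0 ▸ Or.inr ⟨(a₀, a₀), ⟨ha₀, ha₀⟩, hqe a₀⟩)
      | succ n ih => exact Or.inr ((hB n) ▸ ⟨(e, e), ⟨ih, ih⟩, hqe e⟩)
    have hmono : Monotone (fun n => A n ∪ B n) := by
      apply monotone_nat_of_le_succ
      intro n x hx
      exact Or.inl ((hA n) ▸ ⟨(x, e), ⟨hx, heC n⟩, hpe x⟩)
    have hpH : p '' ((⋃ n, A n ∪ B n) ×ˢ (⋃ n, A n ∪ B n)) ⊆ ⋃ n, A n ∪ B n := by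
      rintro z ⟨⟨x, y⟩, ⟨hx, hy⟩, rfl⟩
      obtain ⟨_, ⟨m, rfl⟩, hxm⟩ := hx
      obtain ⟨_, ⟨n, rfl⟩, hyn⟩ := hy
      refine Set.mem_iUnion.mpr ⟨max m n + 1, Or.inl ((hA (max m n)) ▸ ?_)⟩
      exact ⟨(x, y), ⟨hmono (le_max_left m n) hxm, hmono (le_max_right m n) hyn⟩, rfl⟩
    have hqH : q '' ((⋃ n, A n ∪ B n) ×ˢ (⋃ n, A n ∪ B n)) ⊆ ⋃ n, A n ∪ B n := by
      rintro z ⟨⟨x, y⟩, ⟨hx, hy⟩, rfl⟩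
      obtain ⟨_, ⟨m, rfl⟩, hxm⟩ := hx
      obtain ⟨_, ⟨n, rfl⟩, hyn⟩ := hy
      refine Set.mem_iUnion.mpr ⟨max m n + 1, Or.inr ((hB (max m n)) ▸ ?_)⟩
      exact ⟨(x, y), ⟨hmono (le_max_left m n) hxm, hmono (le_max_right m n) hyn⟩, rfl⟩
    have hA0H : A₀ ⊆ ⋃ n, A n ∪ B n := fun x hx =>
      Set.mem_iUnion.mpr ⟨0, Or.inl (hA0 ▸ hx)⟩
    refine ⟨hpH, hqH, hA0H, ?_, ?_⟩
    · -- minimality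
      intro S hpS hqS hAS
      have heS : e ∈ S := hqS ⟨(a₀, a₀), ⟨hAS ha₀, hAS ha₀⟩, hqe a₀⟩
      have hCS : ∀ n, A n ∪ B n ⊆ S := by
        intro n
        induction n with
        | zero =>
          rintro x (hx | hx)
          · exact hAS (hA0 ▸ hx)
          · rw [hB0] at hx
            rcases hx with ⟨⟨a, b⟩, ⟨haA, hb⟩, rfl⟩ | ⟨⟨a, b⟩, ⟨haA, hbA⟩, rfl⟩
            · exact hqS ⟨(a, b), ⟨hAS haA, hb ▸ heS⟩, rfl⟩
            · exact hqS ⟨(a, b), ⟨hAS haA, hAS hbA⟩, rfl⟩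
        | succ n ih =>
          rintro x (hx | hx)
          · rw [hA n] at hx
            obtain ⟨⟨a, b⟩, ⟨haC, hbC⟩, rfl⟩ := hx
            exact hpS ⟨(a, b), ⟨ih haC, ih hbC⟩, rfl⟩
          · rw [hB n] at hx
            obtain ⟨⟨a, b⟩, ⟨haC, hbC⟩, rfl⟩ := hx
            exact hqS ⟨(a, b), ⟨ih haC, ih hbC⟩, rfl⟩
      exact Set.iUnion_subset hCS
    · -- openness
      intro hopen
      have key : (⋃ n, A n ∪ B n) =
          ⋃ h ∈ (⋃ n, A n ∪ B n), {z | p (a₀, q (h, z)) ∈ A₀} := by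
        ext z
        constructor
        · intro hz
          refine Set.mem_biUnion hz ?_
          show p (a₀, q (z, z)) ∈ A₀
          rw [hqe z, hpe a₀]
          exact ha₀
        · intro hmem
          obtain ⟨h, hh, hz⟩ := Set.mem_iUnion₂.mp hmem
          have hz' : p (a₀, q (h, z)) ∈ A₀ := hz
          have hw : q (h, z) ∈ ⋃ n, A n ∪ B n := by
            have : q (h, z) = q (a₀, p (a₀, q (h, z))) := (hqp a₀ _).symm
            rw [this]
            exact hqH ⟨(a₀, p (a₀, q (h, z))), ⟨hA0H ha₀, hA0H hz'⟩, rfl⟩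
          have : z = p (h, q (h, z)) := (hpq h z).symm
          rw [this]
          exact hpH ⟨(h, q (h, z)), ⟨hh, hw⟩, rfl⟩
      rw [key]
      apply isOpen_biUnion
      intro h _
      exact hopen.preimage (hp.comp (continuous_const.prodMk
        (hq.comp (continuous_const.prodMk continuous_id))))
end

section
/- In a rectifiable space G, every open rectifiable subspace H of G is closed in G. -/
/-- In a rectifiable space, every open rectifiable subspace is closed. -/
theorem open_rectifiable_subspace_isClosed
    {G : Type*} [TopologicalSpace G] (e : G) (p q : G × G → G)
    (hp : Continuous p) (hq : Continuous q)
    (hpq : ∀ x y : G, p (x, q (x, y)) = y)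
    (hqp : ∀ x y : G, q (x, p (x, y)) = y)
    (hqe : ∀ x : G, q (x, x) = e)
    (H : Set G) (hHo : IsOpen H)
    (hHp : p '' (H ×ˢ H) ⊆ H) (hHq : q '' (H ×ˢ H) ⊆ H) :
    IsClosed H := by
  rcases H.eq_empty_or_nonempty with rfl | ⟨h0, hh0⟩
  · exact isClosed_empty
  have he : e ∈ H := by
    have := hHq ⟨(h0, h0), Set.mk_mem_prod hh0 hh0, rfl⟩
    rwa [hqe] at this
  apply isClosed_of_closure_subset
  intro x hx
  have hUo : IsOpen ((fun y => q (y, x)) ⁻¹' H) :=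
    hHo.preimage (hq.comp (continuous_id.prodMk continuous_const))
  have hxU : x ∈ (fun y => q (y, x)) ⁻¹' H := by
    simp only [Set.mem_preimage, hqe]; exact he
  rcases mem_closure_iff.mp hx _ hUo hxU with ⟨h, hhU, hhH⟩
  have : p (h, q (h, x)) ∈ H := hHp ⟨(h, q (h, x)), Set.mk_mem_prod hhH hhU, rfl⟩
  rwa [hpq] at this
end

section
/- If H is a locally compact rectifiable subspace of a Hausdorff rectifiable space G, then H is closed in G. -/
/-- A locally compact rectifiable subspace of a Hausdorff rectifiable space
is closed. -/
theorem locallyCompact_rectifiable_subspace_isClosed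
    {G : Type*} [TopologicalSpace G] [T2Space G] (e : G) (p q : G × G → G)
    (hp : Continuous p) (hq : Continuous q)
    (hpq : ∀ x y : G, p (x, q (x, y)) = y)
    (hqp : ∀ x y : G, q (x, p (x, y)) = y)
    (hqe : ∀ x : G, q (x, x) = e)
    (H : Set G)
    (hHp : p '' (H ×ˢ H) ⊆ H) (hHq : q '' (H ×ˢ H) ⊆ H)
    (hlc : LocallyCompactSpace H) :
    IsClosed H := by
  rcases H.eq_empty_or_nonempty with rfl | ⟨h₀, hh₀⟩
  · exact isClosed_empty
  -- e ∈ H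
  have he : e ∈ H := by
    have := hHq ⟨(h₀, h₀), Set.mk_mem_prod hh₀ hh₀, rfl⟩
    rwa [hqe] at this
  -- a compact set C ⊆ H that is a neighborhood of e in H:
  -- ∃ open U, e ∈ U, U ∩ H ⊆ C
  obtain ⟨s, hs_nhds, -, hs_cpt⟩ :=
    hlc.local_compact_nhds (⟨e, he⟩ : H) Set.univ Filter.univ_mem
  set C : Set G := Subtype.val '' s with hC
  have hC_cpt : IsCompact C := hs_cpt.image continuous_subtype_val
  have hC_sub : C ⊆ H := by rintro _ ⟨⟨a, ha⟩, -, rfl⟩; exact ha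
  rw [nhds_subtype, Filter.mem_comap] at hs_nhds
  obtain ⟨t, ht_nhds, ht_sub⟩ := hs_nhds
  obtain ⟨U, hUt, hU_open, heU⟩ := mem_nhds_iff.mp ht_nhds
  have hUH : U ∩ H ⊆ C := by
    rintro x ⟨hxU, hxH⟩
    exact ⟨⟨x, hxH⟩, ht_sub (hUt hxU), rfl⟩
  -- main argument
  rw [← closure_subset_iff_isClosed]
  intro x hx
  -- find h ∈ H close to x so that q (h, x) ∈ U
  have hcont : Continuous fun y => q (y, x) := hq.comp (continuous_id.prodMk continuous_const)
  have : (fun y => q (y, x)) ⁻¹' U ∈ nhds x := by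
    apply hcont.continuousAt.preimage_mem_nhds
    rw [hqe]
    exact hU_open.mem_nhds heU
  obtain ⟨h, hhU, hhH⟩ := mem_closure_iff_nhds.mp hx _ this
  -- z := q (h, x) lies in U ∩ closure H ⊆ closure (U ∩ H) ⊆ C ⊆ H
  set z : G := q (h, x) with hz
  have hzU : z ∈ U := hhU
  have hzcl : z ∈ closure H := by
    have hmap : (fun y => q (h, y)) '' H ⊆ H := fun w ⟨a, haH, haw⟩ =>
      hHq ⟨(h, a), Set.mk_mem_prod hhH haH, haw⟩
    have : z ∈ (fun y => q (h, y)) '' closure H := ⟨x, hx, rfl⟩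
    exact closure_mono hmap
      (image_closure_subset_closure_image
        (hq.comp (continuous_const.prodMk continuous_id)) this)
  have hzH : z ∈ H := by
    have : z ∈ closure (U ∩ H) := hU_open.inter_closure ⟨hzU, hzcl⟩
    exact hC_sub (hC_cpt.isClosed.closure_subset_iff.mpr hUH this)
  have : p (h, z) ∈ H := hHp ⟨(h, z), Set.mk_mem_prod hhH hzH, rfl⟩
  rwa [hz, hpq] at this
end

section
/- Every locally σ-compact Hausdorff rectifiable space is paracompact. -/
/-!
For a neighbourhood `U` of `e`, continuity of `q` at `(x, x)` gives `closure S ⊆ p '' (S ×ˢ U)`.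
Hence the space is regular, and every `K` with `p '' (K ×ˢ U) ⊆ K` is closed. Taking `U`
σ-compact and saturating a point under `p (·, U)` inside σ-compact neighbourhoods gives such
open Lindelöf sets `K z ∋ z`. All their unions are clopen, so for a well-order on the points the
sets `K z \ ⋃ w < z, K w` partition the space into clopen Lindelöf pieces, and on a clopen
Lindelöf piece of a regular space every open cover has a countable locally finite refinement.
-/

open Set Filter Topology Function

universe u

section

variable {X : Type*} [TopologicalSpace X]

theorem IsSigmaCompact.prod {Y : Type*} [TopologicalSpace Y] {s : Set X} {t : Set Y}
    (hs : IsSigmaCompact s) (ht : IsSigmaCompact t) : IsSigmaCompact (s ×ˢ t) := by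
  obtain ⟨K, hK, rfl⟩ := hs
  obtain ⟨L, hL, rfl⟩ := ht
  rw [← iUnion_prod]
  exact isSigmaCompact_iUnion_of_isCompact _ fun nm => (hK nm.1).prod (hL nm.2)

theorem exists_isSigmaCompact_subset_interior
    (hloc : ∀ x : X, ∃ U ∈ 𝓝 x, IsSigmaCompact U) {B : Set X} (hB : IsSigmaCompact B) :
    ∃ A, IsSigmaCompact A ∧ B ⊆ interior A := by
  choose U hU hUσ using hloc
  obtain ⟨t, htc, -, hBt⟩ := hB.isLindelof.elim_nhds_subcover (fun x => interior (U x))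
    fun x _ => interior_mem_nhds.2 (hU x)
  refine ⟨⋃ x ∈ t, U x, isSigmaCompact_biUnion htc fun x _ => hUσ x, hBt.trans ?_⟩
  exact iUnion₂_subset fun x hx => interior_mono (subset_biUnion_of_mem hx)

theorem exists_isOpen_cover_finite_inter_of_closure_subset {V O : ℕ → Set X}
    (hO : ∀ n, IsOpen (O n)) (hVO : ∀ n, closure (V n) ⊆ O n) :
    ∃ W : ℕ → Set X, (∀ n, IsOpen (W n)) ∧ (∀ n, W n ⊆ O n) ∧ ⋃ n, V n ⊆ ⋃ n, W n ∧
      ∀ m, {n | (W n ∩ V m).Nonempty}.Finite := by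
  classical
  refine ⟨fun n => O n \ ⋃ k ∈ Finset.range n, closure (V k),
    fun n => (hO n).sdiff (isClosed_biUnion_finset fun k _ => isClosed_closure),
    fun n => sdiff_subset, ?_, fun m => (finite_le_nat m).subset ?_⟩
  · intro x hx
    have hex : ∃ n, x ∈ closure (V n) :=
      (mem_iUnion.1 hx).imp fun n hn => subset_closure hn
    refine mem_iUnion.2 ⟨Nat.find hex, hVO _ (Nat.find_spec hex), fun hmem => ?_⟩
    obtain ⟨k, hk, hxk⟩ := mem_iUnion₂.1 hmem
    exact Nat.find_min hex (Finset.mem_range.1 hk) hxk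
  · rintro n ⟨y, hyW, hyV⟩
    show n ≤ m
    by_contra! hmn
    exact hyW.2 (mem_iUnion₂.2 ⟨m, Finset.mem_range.2 hmn, subset_closure hyV⟩)

theorem IsLindelof.exists_locallyFinite_refinement [RegularSpace X] {P : Set X}
    (hPl : IsLindelof P) (hP : IsClopen P) {α : Type*} [Nonempty α] {s : α → Set X}
    (hs : ∀ a, IsOpen (s a)) (hPs : P ⊆ ⋃ a, s a) :
    ∃ W : ℕ → Set X, (∀ n, IsOpen (W n)) ∧ (∀ n, W n ⊆ P) ∧ (∀ n, ∃ a, W n ⊆ s a) ∧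
      P ⊆ ⋃ n, W n ∧ LocallyFinite W := by
  let ι := {aV : α × Set X // IsOpen aV.2 ∧ closure aV.2 ⊆ s aV.1 ∩ P}
  have : Nonempty ι := ⟨⟨(Classical.arbitrary α, ∅), isOpen_empty, by simp⟩⟩
  have hPι : P ⊆ ⋃ i : ι, i.1.2 := by
    intro x hx
    obtain ⟨a, ha⟩ := mem_iUnion.1 (hPs hx)
    obtain ⟨t, ht, htc, hts⟩ :=
      exists_mem_nhds_isClosed_subset (((hs a).inter hP.isOpen).mem_nhds ⟨ha, hx⟩)
    exact mem_iUnion.2 ⟨⟨(a, interior t), isOpen_interior,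
      (closure_minimal interior_subset htc).trans hts⟩, mem_interior_iff_mem_nhds.2 ht⟩
  obtain ⟨f, hf⟩ := hPl.indexed_countable_subcover _ (fun i : ι => i.2.1) hPι
  obtain ⟨W, hWo, hWO, hVW, hWfin⟩ := exists_isOpen_cover_finite_inter_of_closure_subset
    (fun n => (hs _).inter hP.isOpen) fun n => (f n).2.2
  refine ⟨W, hWo, fun n => (hWO n).trans inter_subset_right,
    fun n => ⟨_, (hWO n).trans inter_subset_left⟩, hf.trans hVW, fun x => ?_⟩
  by_cases hx : x ∈ P
  · obtain ⟨m, hm⟩ := mem_iUnion.1 (hf hx)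
    exact ⟨_, (f m).2.1.mem_nhds hm, hWfin m⟩
  · refine ⟨Pᶜ, hP.isClosed.isOpen_compl.mem_nhds hx, ?_⟩
    convert finite_empty
    exact eq_empty_of_forall_notMem fun n ⟨y, hyW, hyP⟩ =>
      hyP ((hWO n).trans inter_subset_right hyW)

theorem locallyFinite_uncurry_of_pairwise_disjoint {ι κ : Type*} {P : ι → Set X}
    {W : ι → κ → Set X} (hPo : ∀ i, IsOpen (P i)) (hdisj : Pairwise (Disjoint on P))
    (hcov : ⋃ i, P i = univ) (hWP : ∀ i k, W i k ⊆ P i) (hW : ∀ i, LocallyFinite (W i)) :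
    LocallyFinite (uncurry W) := by
  intro x
  obtain ⟨i, hi⟩ := mem_iUnion.1 (hcov.symm ▸ mem_univ x : x ∈ ⋃ i, P i)
  obtain ⟨N, hN, hNfin⟩ := hW i x
  refine ⟨N ∩ P i, inter_mem hN ((hPo i).mem_nhds hi), (hNfin.image (i, ·)).subset ?_⟩
  rintro ⟨j, k⟩ ⟨y, hyW, hyN, hyP⟩
  obtain rfl : j = i := by
    by_contra hji
    exact (hdisj hji).le_bot ⟨hWP j k hyW, hyP⟩
  exact ⟨k, ⟨y, hyW, hyN⟩, rfl⟩

theorem exists_isClopen_partition_subordinate {ι : Type*} {K : ι → Set X}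
    (hKo : ∀ i, IsOpen (K i)) (hKc : ∀ S : Set ι, IsClosed (⋃ i ∈ S, K i))
    (hcov : ⋃ i, K i = univ) :
    ∃ P : ι → Set X, (∀ i, IsClopen (P i)) ∧ (∀ i, P i ⊆ K i) ∧
      Pairwise (Disjoint on P) ∧ ⋃ i, P i = univ := by
  obtain ⟨_, _⟩ := exists_wellFoundedLT ι
  have hdisj : ∀ i j, i < j → Disjoint (K i \ ⋃ k ∈ Iio i, K k) (K j \ ⋃ k ∈ Iio j, K k) :=
    fun i j hij => disjoint_left.2 fun x hi hj => hj.2 (mem_iUnion₂.2 ⟨i, hij, hi.1⟩)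
  refine ⟨fun i => K i \ ⋃ k ∈ Iio i, K k, fun i => ⟨?_, (hKo i).sdiff (hKc _)⟩,
    fun i => sdiff_subset, fun i j hij => ?_, eq_univ_of_forall fun x => ?_⟩
  · exact IsClosed.sdiff (by simpa using hKc {i}) (isOpen_biUnion fun k _ => hKo k)
  · rcases lt_or_gt_of_ne hij with h | h
    exacts [hdisj i j h, (hdisj j i h).symm]
  · have hx : {i | x ∈ K i}.Nonempty := mem_iUnion.1 (hcov.symm ▸ mem_univ x)
    refine mem_iUnion.2 ⟨wellFounded_lt.min _ hx, wellFounded_lt.min_mem _ hx, fun hmem => ?_⟩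
    obtain ⟨k, hk, hxk⟩ := mem_iUnion₂.1 hmem
    exact wellFounded_lt.not_lt_min {i | x ∈ K i} hxk hk

end

theorem ParacompactSpace.of_isClopen_isLindelof_partition {X ι : Type u} [TopologicalSpace X]
    [RegularSpace X] {P : ι → Set X} (hPc : ∀ i, IsClopen (P i)) (hPl : ∀ i, IsLindelof (P i))
    (hdisj : Pairwise (Disjoint on P)) (hcov : ⋃ i, P i = univ) : ParacompactSpace X := by
  refine ⟨fun α s hso hs => ?_⟩
  rcases isEmpty_or_nonempty α with hα | hα
  · exact ⟨α, s, hso, hs, locallyFinite_of_finite s, fun a => ⟨a, subset_rfl⟩⟩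
  choose W hWo hWP hWs hPW hWlf using fun i =>
    (hPl i).exists_locallyFinite_refinement (hPc i) hso (hs ▸ subset_univ (P i))
  refine ⟨ι × ℕ, uncurry W, fun b => hWo b.1 b.2, ?_,
    locallyFinite_uncurry_of_pairwise_disjoint (fun i => (hPc i).isOpen) hdisj hcov hWP hWlf,
    fun b => hWs b.1 b.2⟩
  refine eq_univ_of_forall fun x => ?_
  obtain ⟨i, hi⟩ := mem_iUnion.1 (hcov.symm ▸ mem_univ x : x ∈ ⋃ i, P i)
  obtain ⟨n, hn⟩ := mem_iUnion.1 (hPW i hi)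
  exact mem_iUnion.2 ⟨(i, n), hn⟩

namespace Rectifiable

variable {G : Type*} {e : G} {p q : G × G → G}

theorem p_apply_e (hpq : ∀ x y : G, p (x, q (x, y)) = y) (hqe : ∀ x : G, q (x, x) = e) (x : G) :
    p (x, e) = x := by
  simpa [hqe] using hpq x x

variable [TopologicalSpace G]

theorem closure_subset_image_prod (hq : Continuous q) (hpq : ∀ x y : G, p (x, q (x, y)) = y)
    (hqe : ∀ x : G, q (x, x) = e) (S : Set G) {U : Set G} (hU : U ∈ 𝓝 e) :
    closure S ⊆ p '' (S ×ˢ U) := by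
  intro x hx
  have hUx : (fun v => q (v, x)) ⁻¹' U ∈ 𝓝 x :=
    (hq.comp (.prodMk continuous_id continuous_const)).continuousAt.preimage_mem_nhds
      (by simpa [hqe] using hU)
  obtain ⟨v, hvU, hvS⟩ := mem_closure_iff_nhds.1 hx _ hUx
  exact ⟨(v, q (v, x)), ⟨hvS, hvU⟩, hpq v x⟩

theorem isClosed_of_image_prod_subset (hq : Continuous q)
    (hpq : ∀ x y : G, p (x, q (x, y)) = y) (hqe : ∀ x : G, q (x, x) = e)
    {U K : Set G} (hU : U ∈ 𝓝 e) (hK : p '' (K ×ˢ U) ⊆ K) : IsClosed K :=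
  isClosed_of_closure_subset ((closure_subset_image_prod hq hpq hqe K hU).trans hK)

theorem regularSpace (hp : Continuous p) (hq : Continuous q)
    (hpq : ∀ x y : G, p (x, q (x, y)) = y) (hqe : ∀ x : G, q (x, x) = e) : RegularSpace G := by
  refine .of_exists_mem_nhds_isClosed_subset fun x s hs => ?_
  have hps : p ⁻¹' s ∈ 𝓝 (x, e) := hp.continuousAt.preimage_mem_nhds (by rwa [p_apply_e hpq hqe])
  obtain ⟨V, hV, U, hU, hVU⟩ := mem_nhds_prod_iff.1 hps
  exact ⟨closure V, mem_of_superset hV subset_closure, isClosed_closure,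
    (closure_subset_image_prod hq hpq hqe V hU).trans (image_subset_iff.2 hVU)⟩

theorem exists_isOpen_isLindelof_image_prod_subset (hp : Continuous p) (hq : Continuous q)
    (hpq : ∀ x y : G, p (x, q (x, y)) = y) (hqe : ∀ x : G, q (x, x) = e)
    (hloc : ∀ x : G, ∃ U ∈ 𝓝 x, IsSigmaCompact U) {U : Set G} (hU : U ∈ 𝓝 e)
    (hUσ : IsSigmaCompact U) (z : G) :
    ∃ K, z ∈ K ∧ IsOpen K ∧ IsLindelof K ∧ p '' (K ×ˢ U) ⊆ K := by
  have step : ∀ S, IsSigmaCompact S → ∃ A, IsSigmaCompact A ∧ p '' (S ×ˢ U) ⊆ interior A :=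
    fun S hS => exists_isSigmaCompact_subset_interior hloc ((hS.prod hUσ).image hp)
  choose! F hFσ hF using step
  set A : ℕ → Set G := fun n => F^[n] {z}
  have hAσ : ∀ n, IsSigmaCompact (A n) := by
    intro n
    induction n with
    | zero => exact isCompact_singleton.isSigmaCompact
    | succ n ih => simpa only [A, Function.iterate_succ_apply'] using hFσ _ ih
  have hA : ∀ n, p '' (A n ×ˢ U) ⊆ interior (A (n + 1)) := fun n => by
    simpa only [A, Function.iterate_succ_apply'] using hF _ (hAσ n)
  have habs : p '' ((⋃ n, interior (A n)) ×ˢ U) ⊆ ⋃ n, interior (A n) := by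
    rintro _ ⟨⟨x, u⟩, ⟨hx, hu⟩, rfl⟩
    obtain ⟨n, hn⟩ := mem_iUnion.1 hx
    exact mem_iUnion.2 ⟨n + 1, hA n ⟨(x, u), ⟨interior_subset hn, hu⟩, rfl⟩⟩
  refine ⟨⋃ n, interior (A n),
    mem_iUnion.2 ⟨1, hA 0 ⟨(z, e), ⟨rfl, mem_of_mem_nhds hU⟩, p_apply_e hpq hqe z⟩⟩,
    isOpen_iUnion fun _ => isOpen_interior, ?_, habs⟩
  exact (isSigmaCompact_iUnion A hAσ).isLindelof.of_isClosed_subset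
    (isClosed_of_image_prod_subset hq hpq hqe hU habs) (iUnion_mono fun n => interior_subset)

end Rectifiable

theorem paracompact_of_locally_sigmaCompact_rectifiable_general
    {G : Type*} [TopologicalSpace G] (e : G) (p q : G × G → G)
    (hp : Continuous p) (hq : Continuous q)
    (hpq : ∀ x y : G, p (x, q (x, y)) = y)
    (hqe : ∀ x : G, q (x, x) = e)
    (hloc : ∀ x : G, ∃ U ∈ nhds x, IsSigmaCompact (closure U)) :
    ParacompactSpace G := by
  have hloc' : ∀ x : G, ∃ U ∈ 𝓝 x, IsSigmaCompact U := fun x =>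
    let ⟨U, hU, hUσ⟩ := hloc x
    ⟨closure U, mem_of_superset hU subset_closure, hUσ⟩
  have := Rectifiable.regularSpace hp hq hpq hqe
  obtain ⟨U, hU, hUσ⟩ := hloc' e
  choose K hzK hKo hKl hKU using
    Rectifiable.exists_isOpen_isLindelof_image_prod_subset hp hq hpq hqe hloc' hU hUσ
  have hKc : ∀ S : Set G, IsClosed (⋃ z ∈ S, K z) := fun S => by
    refine Rectifiable.isClosed_of_image_prod_subset hq hpq hqe hU ?_
    rintro _ ⟨⟨x, u⟩, ⟨hx, hu⟩, rfl⟩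
    obtain ⟨z, hz, hxz⟩ := mem_iUnion₂.1 hx
    exact mem_iUnion₂.2 ⟨z, hz, hKU z ⟨(x, u), ⟨hxz, hu⟩, rfl⟩⟩
  obtain ⟨P, hPc, hPK, hdisj, hcov⟩ := exists_isClopen_partition_subordinate hKo hKc
    (eq_univ_of_forall fun z => mem_iUnion.2 ⟨z, hzK z⟩)
  exact .of_isClopen_isLindelof_partition hPc
    (fun z => (hKl z).of_isClosed_subset (hPc z).isClosed (hPK z)) hdisj hcov

/-- Every locally σ-compact Hausdorff rectifiable space is paracompact. -/
theorem paracompact_of_locally_sigmaCompact_rectifiable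
    {G : Type*} [TopologicalSpace G] [T2Space G] (e : G) (p q : G × G → G)
    (hp : Continuous p) (hq : Continuous q)
    (hpq : ∀ x y : G, p (x, q (x, y)) = y)
    (hqp : ∀ x y : G, q (x, p (x, y)) = y)
    (hqe : ∀ x : G, q (x, x) = e)
    (hloc : ∀ x : G, ∃ U ∈ nhds x, IsSigmaCompact (closure U)) :
    ParacompactSpace G :=
  paracompact_of_locally_sigmaCompact_rectifiable_general e p q hp hq hpq hqe hloc
end

section
/- Every locally compact Hausdorff rectifiable space is paracompact. -/
open Set

/-- If a topological space is partitioned into open sets each of which is paracompact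
(as a subspace), then the whole space is paracompact. -/
theorem paracompact_of_clopen_partition {X : Type*} [TopologicalSpace X]
    (T : X → Set X) (hmem : ∀ x, x ∈ T x)
    (heq : ∀ x y, y ∈ T x → T y = T x)
    (hopen : ∀ x, IsOpen (T x))
    (hpara : ∀ x, ParacompactSpace (T x)) : ParacompactSpace X := by
  constructor
  intro α s hso hsu
  -- For each set in the range of `T`, choose a nice refinement inside it.
  have hP : ∀ A : Set X, A ∈ Set.range T → ∃ v : α → Set X,
      (∀ a, IsOpen (v a)) ∧ (A ⊆ ⋃ a, v a) ∧ (∀ a, v a ⊆ s a ∩ A) ∧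
      (∀ y ∈ A, ∃ n ∈ nhds y, {a | (v a ∩ n).Nonempty}.Finite) := by
    rintro A ⟨x, rfl⟩
    haveI := hpara x
    have hcov : ⋃ a, ((↑) : T x → X) ⁻¹' s a = univ := by
      apply eq_univ_of_forall
      intro z
      have : (z : X) ∈ ⋃ a, s a := hsu ▸ mem_univ _
      rcases mem_iUnion.1 this with ⟨a, ha⟩
      exact mem_iUnion.2 ⟨a, ha⟩
    obtain ⟨v', hv'o, hv'u, hv'lf, hv's⟩ := precise_refinement
      (fun a => ((↑) : T x → X) ⁻¹' s a)
      (fun a => (hso a).preimage continuous_subtype_val) hcov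
    refine ⟨fun a => ((↑) : T x → X) '' v' a, fun a => (hopen x).isOpenMap_subtype_val _ (hv'o a),
      ?_, ?_, ?_⟩
    · intro y hy
      have : (⟨y, hy⟩ : T x) ∈ ⋃ a, v' a := hv'u ▸ mem_univ _
      rcases mem_iUnion.1 this with ⟨a, ha⟩
      exact mem_iUnion.2 ⟨a, ⟨⟨y, hy⟩, ha, rfl⟩⟩
    · rintro a z ⟨z', hz', rfl⟩
      exact ⟨hv's a hz', z'.2⟩
    · intro y hy
      rcases hv'lf ⟨y, hy⟩ with ⟨n', hn', hfin⟩
      refine ⟨((↑) : T x → X) '' n', ((hopen x).isOpenMap_subtype_val).image_mem_nhds hn', ?_⟩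
      refine hfin.subset ?_
      rintro a ⟨z, ⟨z₁, hz₁, hz₁e⟩, ⟨z₂, hz₂, hz₂e⟩⟩
      have : z₁ = z₂ := Subtype.val_injective (hz₁e.trans hz₂e.symm)
      exact ⟨z₁, hz₁, this ▸ hz₂⟩
  choose! f hf1 hf2 hf3 hf4 using hP
  set g : X → α → Set X := fun x => f (T x) with hg
  have hgT : ∀ x y : X, T x = T y → g x = g y := by
    intro x y h; simp only [hg, h]
  refine ⟨α, fun a => ⋃ x, g x a, ?_, ?_, ?_, ?_⟩
  · exact fun a => isOpen_iUnion fun x => hf1 _ ⟨x, rfl⟩ a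
  · apply eq_univ_of_forall
    intro y
    have : y ∈ ⋃ a, g y a := hf2 _ ⟨y, rfl⟩ (hmem y)
    rcases mem_iUnion.1 this with ⟨a, ha⟩
    exact mem_iUnion.2 ⟨a, mem_iUnion.2 ⟨y, ha⟩⟩
  · intro y
    rcases hf4 _ ⟨y, rfl⟩ y (hmem y) with ⟨n, hn, hfin⟩
    refine ⟨n ∩ T y, Filter.inter_mem hn ((hopen y).mem_nhds (hmem y)), hfin.subset ?_⟩
    rintro a ⟨z, hz, hzn, hzT⟩
    rcases mem_iUnion.1 hz with ⟨x, hzx⟩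
    have hzTx : z ∈ T x := (hf3 _ ⟨x, rfl⟩ a hzx).2
    have : T x = T y := (heq x z hzTx).symm.trans (heq y z hzT)
    rw [hgT x y this] at hzx
    exact ⟨z, hzx, hzn⟩
  · intro a
    exact ⟨a, iUnion_subset fun x => fun z hz => (hf3 _ ⟨x, rfl⟩ a hz).1⟩

/-- Every locally compact Hausdorff rectifiable space is paracompact. -/
theorem paracompact_of_locallyCompact_rectifiable
    {G : Type*} [TopologicalSpace G] [T2Space G] [LocallyCompactSpace G]
    (e : G) (p q : G × G → G)
    (hp : Continuous p) (hq : Continuous q)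
    (hpq : ∀ x y : G, p (x, q (x, y)) = y)
    (hqp : ∀ x y : G, q (x, p (x, y)) = y)
    (hqe : ∀ x : G, q (x, x) = e) :
    ParacompactSpace G := by
  obtain ⟨C, hCcomp, hCe⟩ := exists_compact_mem_nhds e
  have heU : e ∈ interior C := mem_interior_iff_mem_nhds.2 hCe
  -- the reachability relation via steps `q (x, y) ∈ C`
  set reach : G → G → Prop := Relation.ReflTransGen (fun x y => q (x, y) ∈ C) with hreach
  have contq1 : ∀ y : G, Continuous fun x => q (x, y) :=
    fun y => hq.comp (continuous_id.prodMk continuous_const)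
  have contq2 : ∀ x : G, Continuous fun y => q (x, y) :=
    fun x => hq.comp (continuous_const.prodMk continuous_id)
  -- forward and backward neighborhoods
  have hNf : ∀ x : G, {y | q (x, y) ∈ interior C} ∈ nhds x := by
    intro x
    refine (isOpen_interior.preimage (contq2 x)).mem_nhds ?_
    show q (x, x) ∈ interior C
    rw [hqe x]; exact heU
  have hNb : ∀ x : G, {y | q (y, x) ∈ interior C} ∈ nhds x := by
    intro x
    refine (isOpen_interior.preimage (contq1 x)).mem_nhds ?_
    show q (x, x) ∈ interior C
    rw [hqe x]; exact heU
  -- mutual reachability classes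
  set T : G → Set G := fun x => {y | reach x y ∧ reach y x} with hT
  have hmem : ∀ x, x ∈ T x := fun x => ⟨Relation.ReflTransGen.refl, Relation.ReflTransGen.refl⟩
  have heq : ∀ x y, y ∈ T x → T y = T x := by
    rintro x y ⟨hxy, hyx⟩
    ext z
    exact ⟨fun ⟨hyz, hzy⟩ => ⟨hxy.trans hyz, hzy.trans hyx⟩,
      fun ⟨hxz, hzx⟩ => ⟨hyx.trans hxz, hzx.trans hxy⟩⟩
  -- `R x = {y | reach x y}` is open and closed
  have hRopen : ∀ x, IsOpen {y | reach x y} := by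
    intro x
    rw [isOpen_iff_mem_nhds]
    intro y hy
    filter_upwards [hNf y] with z hz
    exact hy.tail (interior_subset hz)
  have hRclosed : ∀ x, IsClosed {y | reach x y} := by
    intro x
    refine isClosed_of_closure_subset ?_
    intro y hy
    obtain ⟨w, hwU, hwR⟩ := mem_closure_iff_nhds.1 hy _ (hNb y)
    exact hwR.tail (interior_subset hwU)
  have hSopen : ∀ x, IsOpen {y | reach y x} := by
    intro x
    rw [isOpen_iff_mem_nhds]
    intro y hy
    filter_upwards [hNb y] with z hz
    exact (Relation.ReflTransGen.single (show q (z, y) ∈ C from interior_subset hz)).trans hy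
  have hSclosed : ∀ x, IsClosed {y | reach y x} := by
    intro x
    refine isClosed_of_closure_subset ?_
    intro y hy
    obtain ⟨w, hwU, hwS⟩ := mem_closure_iff_nhds.1 hy _ (hNf y)
    exact (Relation.ReflTransGen.single (show q (y, w) ∈ C from interior_subset hwU)).trans hwS
  have hTopen : ∀ x, IsOpen (T x) := fun x => (hRopen x).inter (hSopen x)
  have hTclosed : ∀ x, IsClosed (T x) := fun x => (hRclosed x).inter (hSclosed x)
  -- `{y | reach x y}` is σ-compact
  have hsigma : ∀ x, IsSigmaCompact (T x) := by
    intro x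
    set P : ℕ → Set G := fun n => Nat.rec ({x} : Set G) (fun _ Pn => p '' (Pn ×ˢ C)) n with hP
    have hPcomp : ∀ n, IsCompact (P n) := by
      intro n
      induction n with
      | zero => exact isCompact_singleton
      | succ n ih => exact (ih.prod hCcomp).image hp
    have hRsub : {y | reach x y} ⊆ ⋃ n, P n := by
      intro y hy
      induction hy with
      | refl => exact mem_iUnion.2 ⟨0, rfl⟩
      | @tail b c hxb hbc ih =>
        rcases mem_iUnion.1 ih with ⟨n, hbn⟩
        refine mem_iUnion.2 ⟨n + 1, ⟨(b, q (b, c)), mk_mem_prod hbn hbc, hpq b c⟩⟩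
    refine ⟨fun n => T x ∩ P n, fun n => (hPcomp n).inter_left (hTclosed x), ?_⟩
    rw [← inter_iUnion]
    exact inter_eq_left.2 fun y hy => hRsub hy.1
  refine paracompact_of_clopen_partition T hmem heq hTopen ?_
  intro x
  haveI : SigmaCompactSpace (T x) := isSigmaCompact_iff_sigmaCompactSpace.1 (hsigma x)
  haveI : LocallyCompactSpace (T x) := (hTopen x).locallyCompactSpace
  infer_instance
end

section
/- Every connected locally compact Hausdorff rectifiable space is σ-compact. -/
/-- Every connected locally compact Hausdorff rectifiable space is σ-compact. -/
theorem sigmaCompact_of_connected_locallyCompact_rectifiable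
    {G : Type*} [TopologicalSpace G] [T2Space G] [ConnectedSpace G]
    [LocallyCompactSpace G]
    (e : G) (p q : G × G → G)
    (hp : Continuous p) (hq : Continuous q)
    (hpq : ∀ x y : G, p (x, q (x, y)) = y)
    (hqp : ∀ x y : G, q (x, p (x, y)) = y)
    (hqe : ∀ x : G, q (x, x) = e) :
    SigmaCompactSpace G := by
  obtain ⟨K, hKc, hKn⟩ := exists_compact_mem_nhds e
  -- iterated "translates" of K
  set F : ℕ → Set G := fun n => Nat.rec K (fun _ S => p '' (S ×ˢ K)) n with hF
  have hF0 : F 0 = K := rfl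
  have hFs : ∀ n, F (n + 1) = p '' (F n ×ˢ K) := fun n => rfl
  have hFc : ∀ n, IsCompact (F n) := by
    intro n
    induction n with
    | zero => exact hKc
    | succ n ih => rw [hFs]; exact (ih.prod hKc).image hp
  set U : Set G := ⋃ n, F n with hU
  have heK : e ∈ interior K := mem_interior_iff_mem_nhds.2 hKn
  have hne : e ∈ U := Set.mem_iUnion.2 ⟨0, interior_subset heK⟩
  have hopen : IsOpen U := by
    rw [isOpen_iff_mem_nhds]
    intro x hx
    obtain ⟨n, hxn⟩ := Set.mem_iUnion.1 hx
    have hV : IsOpen {y | q (x, y) ∈ interior K} :=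
      isOpen_interior.preimage (hq.comp (Continuous.prodMk_right x))
    have hsub : {y | q (x, y) ∈ interior K} ⊆ U := by
      intro y hy
      refine Set.mem_iUnion.2 ⟨n + 1, ?_⟩
      rw [hFs]
      exact ⟨(x, q (x, y)), ⟨hxn, interior_subset hy⟩, hpq x y⟩
    exact Filter.mem_of_superset
      (hV.mem_nhds (by simp [hqe x, heK])) hsub
  have hclosed : IsClosed U := by
    rw [← closure_subset_iff_isClosed]
    intro x hx
    have hN : IsOpen {y | q (y, x) ∈ interior K} :=
      isOpen_interior.preimage (hq.comp (continuous_id.prodMk continuous_const))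
    have hxN : x ∈ {y | q (y, x) ∈ interior K} := by simp [hqe x, heK]
    obtain ⟨y, hyN, hyU⟩ := mem_closure_iff.1 hx _ hN hxN
    obtain ⟨n, hyn⟩ := Set.mem_iUnion.1 hyU
    refine Set.mem_iUnion.2 ⟨n + 1, ?_⟩
    rw [hFs]
    exact ⟨(y, q (y, x)), ⟨hyn, interior_subset hyN⟩, hpq y x⟩
  have hUuniv : U = Set.univ :=
    (isClopen_iff.1 ⟨hclosed, hopen⟩).resolve_left (Set.nonempty_iff_ne_empty.1 ⟨e, hne⟩)
  exact ⟨⟨F, hFc, hUuniv⟩⟩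
end

section
/- Every locally compact Hausdorff rectifiable space is a normal topological space. -/
/-!
Fix a compact neighbourhood `K` of `e` and call `y`, `z` adjacent when `q (y, z)` and `q (z, y)`
both lie in `K`. Every point is adjacent to a whole neighbourhood of itself, so the classes of the
equivalence relation generated by adjacency are clopen. A point reached from `x` in `n` steps lies
in the compact set obtained from `{x}` by applying `n` times `S ↦ p '' (S ×ˢ K)`, since
`z = p (y, q (y, z))`; hence every class is σ-compact. A σ-compact locally compact Hausdorff space
is paracompact, hence normal, and a space split into clopen normal pieces is normal.
-/

open Set Filter Topology Relation

section Topology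

variable {X ι : Type*} [TopologicalSpace X]

theorem NormalSpace.of_isLocallyConstant {f : X → ι} (hf : IsLocallyConstant f)
    (h : ∀ i, NormalSpace (f ⁻¹' {i})) : NormalSpace X where
  normal s t hs ht hst := by
    choose u v hu hv hsu htv huv using fun i =>
      normal_separation (X := f ⁻¹' {i}) (hs.preimage continuous_subtype_val)
        (ht.preimage continuous_subtype_val) (hst.preimage _)
    have hfib (i : ι) : IsOpen (f ⁻¹' {i}) := IsLocallyConstant.iff_isOpen_fiber.1 hf i
    refine ⟨⋃ i, (↑) '' u i, ⋃ i, (↑) '' v i,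
      isOpen_iUnion fun i => (hfib i).isOpenMap_subtype_val _ (hu i),
      isOpen_iUnion fun i => (hfib i).isOpenMap_subtype_val _ (hv i),
      fun x hx => mem_iUnion.2 ⟨f x, ⟨x, rfl⟩, hsu _ hx, rfl⟩,
      fun x hx => mem_iUnion.2 ⟨f x, ⟨x, rfl⟩, htv _ hx, rfl⟩, ?_⟩
    rw [Set.disjoint_left]
    rintro _ hxu hxv
    obtain ⟨i, y, hyu, rfl⟩ := mem_iUnion.1 hxu
    obtain ⟨j, z, hzv, hzy⟩ := mem_iUnion.1 hxv
    obtain rfl : j = i := by rw [← z.2, ← y.2, hzy]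
    exact Set.disjoint_left.1 (huv j) hyu (Subtype.ext hzy ▸ hzv)

theorem NormalSpace.of_isLocallyConstant_of_isSigmaCompact [WeaklyLocallyCompactSpace X]
    [T2Space X] {f : X → ι} (hf : IsLocallyConstant f) (h : ∀ i, IsSigmaCompact (f ⁻¹' {i})) :
    NormalSpace X :=
  .of_isLocallyConstant hf fun i =>
    have : WeaklyLocallyCompactSpace (f ⁻¹' {i}) := (hf.isClosed_fiber i).weaklyLocallyCompactSpace
    have : SigmaCompactSpace (f ⁻¹' {i}) := isSigmaCompact_iff_sigmaCompactSpace.1 (h i)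
    inferInstance

theorem isLocallyConstant_quotMk {r : X → X → Prop} (hr : ∀ x, {y | r x y} ∈ 𝓝 x) :
    IsLocallyConstant (Quot.mk r) :=
  (IsLocallyConstant.iff_eventually_eq _).2 fun x => by
    filter_upwards [hr x] with y hy using (Quot.sound hy).symm

theorem isSigmaCompact_setOf_reflTransGen {Y : Type*} [TopologicalSpace Y] {p : X × Y → X}
    (hp : Continuous p) {K : Set Y} (hK : IsCompact K) {r : X → X → Prop}
    (hr : ∀ y z, r y z → ∃ k ∈ K, p (y, k) = z) {x : X}
    (hclosed : IsClosed {y | ReflTransGen r x y}) : IsSigmaCompact {y | ReflTransGen r x y} := by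
  let C : ℕ → Set X := fun n => (fun S => p '' (S ×ˢ K))^[n] {x}
  have hC_succ (n : ℕ) : C (n + 1) = p '' (C n ×ˢ K) := Function.iterate_succ_apply' _ _ _
  have hC_compact (n : ℕ) : IsCompact (C n) := by
    induction n with
    | zero => exact isCompact_singleton
    | succ n ih => exact hC_succ n ▸ (ih.prod hK).image hp
  refine (isSigmaCompact_iUnion_of_isCompact C hC_compact).of_isClosed_subset hclosed ?_
  intro y hy
  induction hy with
  | refl => exact mem_iUnion.2 ⟨0, rfl⟩
  | tail _ hyz ih =>
    obtain ⟨n, hn⟩ := mem_iUnion.1 ih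
    obtain ⟨k, hk, rfl⟩ := hr _ _ hyz
    exact mem_iUnion.2 ⟨n + 1, hC_succ n ▸ mem_image_of_mem p ⟨hn, hk⟩⟩

end Topology

theorem Quot.mk_preimage_singleton_eq_setOf_reflTransGen {α : Type*} {r : α → α → Prop}
    [Std.Symm r] (x : α) :
    Quot.mk r ⁻¹' {Quot.mk r x} = {y | ReflTransGen r x y} := by
  ext y
  rw [mem_preimage, mem_singleton_iff, Quot.eq, EqvGen.eqvGen_eq_reflTransGen,
    Std.Symm.iff (r := ReflTransGen r)]
  rfl

theorem rectifiable_adjacent_mem_nhds {G : Type*} [TopologicalSpace G] {e : G}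
    {q : G × G → G} (hq : Continuous q) (hqe : ∀ x, q (x, x) = e) {K : Set G} (hK : K ∈ 𝓝 e)
    (y : G) : {z | q (y, z) ∈ K ∧ q (z, y) ∈ K} ∈ 𝓝 y := by
  have hleft : Tendsto (fun z => q (y, z)) (𝓝 y) (𝓝 e) :=
    hqe y ▸ (hq.comp (continuous_const.prodMk continuous_id)).tendsto y
  have hright : Tendsto (fun z => q (z, y)) (𝓝 y) (𝓝 e) :=
    hqe y ▸ (hq.comp (continuous_id.prodMk continuous_const)).tendsto y
  exact inter_mem (hleft hK) (hright hK)

theorem normal_of_locallyCompact_rectifiable_general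
    {G : Type*} [TopologicalSpace G] [T2Space G] [LocallyCompactSpace G]
    (e : G) (p q : G × G → G)
    (hp : Continuous p) (hq : Continuous q)
    (hpq : ∀ x y : G, p (x, q (x, y)) = y)
    (hqe : ∀ x : G, q (x, x) = e) :
    NormalSpace G := by
  obtain ⟨K, hK, hKe⟩ := exists_compact_mem_nhds e
  let adjacent : G → G → Prop := fun y z => q (y, z) ∈ K ∧ q (z, y) ∈ K
  have : Std.Symm adjacent := ⟨fun _ _ h => h.symm⟩
  have hf : IsLocallyConstant (Quot.mk adjacent) :=
    isLocallyConstant_quotMk (rectifiable_adjacent_mem_nhds hq hqe hKe)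
  refine .of_isLocallyConstant_of_isSigmaCompact hf (Quot.ind fun x => ?_)
  rw [Quot.mk_preimage_singleton_eq_setOf_reflTransGen]
  refine isSigmaCompact_setOf_reflTransGen hp hK (fun y z h => ⟨q (y, z), h.1, hpq y z⟩) ?_
  rw [← Quot.mk_preimage_singleton_eq_setOf_reflTransGen]
  exact hf.isClosed_fiber _

/-- Every locally compact Hausdorff rectifiable space is normal. -/
theorem normal_of_locallyCompact_rectifiable
    {G : Type*} [TopologicalSpace G] [T2Space G] [LocallyCompactSpace G]
    (e : G) (p q : G × G → G)
    (hp : Continuous p) (hq : Continuous q)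
    (hpq : ∀ x y : G, p (x, q (x, y)) = y)
    (hqp : ∀ x y : G, q (x, p (x, y)) = y)
    (hqe : ∀ x : G, q (x, x) = e) :
    NormalSpace G :=
  normal_of_locallyCompact_rectifiable_general e p q hp hq hpq hqe
end

section
/- Let G be a Hausdorff rectifiable space that is not locally compact. Then for any compact subset F of G, any compact subset K of G, and any open neighborhood U of e, there exists a point c ∈ U such that p(F × {c}) ∩ K = ∅. -/
/-- In a non-locally-compact Hausdorff rectifiable space, for compact `F`, `K`
and any open neighborhood `U` of `e`, there is `c ∈ U` with `(F·c) ∩ K = ∅`. -/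
theorem exists_translate_disjoint_of_not_locallyCompact
    {G : Type*} [TopologicalSpace G] [T2Space G] (e : G) (p q : G × G → G)
    (hp : Continuous p) (hq : Continuous q)
    (hpq : ∀ x y : G, p (x, q (x, y)) = y)
    (hqp : ∀ x y : G, q (x, p (x, y)) = y)
    (hqe : ∀ x : G, q (x, x) = e)
    (hnlc : ¬ LocallyCompactSpace G)
    (F K : Set G) (hF : IsCompact F) (hK : IsCompact K)
    (U : Set G) (hU : IsOpen U) (heU : e ∈ U) :
    ∃ c ∈ U, p '' (F ×ˢ {c}) ∩ K = ∅ := by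
  by_contra h
  push_neg at h
  apply hnlc
  set C : Set G := q '' (F ×ˢ K) with hC
  have hCc : IsCompact C := (hF.prod hK).image hq
  have hUC : U ⊆ C := by
    intro c hc
    obtain ⟨y, hy⟩ := h c hc
    obtain ⟨⟨⟨x, c'⟩, ⟨hx, hc'⟩, rfl⟩, hyK⟩ := hy
    rcases Set.mem_singleton_iff.1 hc' with rfl
    refine ⟨(x, p (x, c')), ⟨hx, hyK⟩, ?_⟩
    exact hqp x c'
  have : WeaklyLocallyCompactSpace G := by
    refine ⟨fun a => ⟨(fun y => p (a, y)) '' C, hCc.image (hp.comp (Continuous.prodMk_right a)), ?_⟩⟩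
    refine mem_nhds_iff.2 ⟨{y | q (a, y) ∈ U}, ?_, hU.preimage (hq.comp (Continuous.prodMk_right a)), ?_⟩
    · intro y hy
      exact ⟨q (a, y), hUC hy, hpq a y⟩
    · show q (a, a) ∈ U
      rw [hqe a]; exact heU
  infer_instance
end

section
/- Suppose G is a Hausdorff rectifiable space such that any two distinct points of G can be separated by a compact subset. Then either G is locally compact, or every σ-compact subspace of G is zero-dimensional. -/
/-! A rectifiable space is regular and homogeneous (`y ↦ p (w, q (z, y))` is a homeomorphism taking
`z` to `w`), so if it is not locally compact, no point has a compact neighbourhood. Then compacta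
are totally disconnected: if a continuum `C` contained `c₀ ≠ c₁`, separated by a compactum `F`,
then for every `g` near `c₀` the continuum `{p (c, q (c₀, g)) | c ∈ C}` would run from `g` to a
point near `c₁`, hence meet `F`, putting a neighbourhood of `c₀` inside the compact set
`p (c₀, q (C × F))`. Finally, in a σ-compact regular space with totally disconnected compacta,
two disjoint closed sets are pushed apart over the compact pieces `Kₙ` one at a time (using a
clopen partition of each `Kₙ`), and the increasing unions give a clopen separation. -/

open Set Filter Topology

section ZeroDimensional

variable {X : Type*} [TopologicalSpace X]

theorem exists_isOpen_disjoint_closure_of_isClosed [NormalSpace X] {A B : Set X}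
    (hA : IsClosed A) (hB : IsClosed B) (hAB : Disjoint A B) :
    ∃ U V : Set X, IsOpen U ∧ IsOpen V ∧ A ⊆ U ∧ B ⊆ V ∧ Disjoint (closure U) (closure V) := by
  obtain ⟨U, hU, hAU, hUB⟩ := normal_exists_closure_subset hA hB.isOpen_compl
    (subset_compl_iff_disjoint_right.mpr hAB)
  obtain ⟨V, hV, hBV, hVU⟩ := normal_exists_closure_subset hB isClosed_closure.isOpen_compl
    (subset_compl_comm.mp hUB)
  exact ⟨U, V, hU, hV, hAU, hBV, (subset_compl_iff_disjoint_right.mp hVU).symm⟩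

theorem IsCompact.exists_isOpen_disjoint_closure_covering [T4Space X] {K A B : Set X}
    (hK : IsCompact K) (hKtd : IsTotallyDisconnected K) (hA : IsClosed A) (hB : IsClosed B)
    (hAB : Disjoint A B) :
    ∃ U V : Set X, IsOpen U ∧ IsOpen V ∧ A ⊆ U ∧ B ⊆ V ∧ K ⊆ U ∪ V ∧
      Disjoint (closure U) (closure V) := by
  have : CompactSpace K := isCompact_iff_compactSpace.mp hK
  have : TotallyDisconnectedSpace K := totallyDisconnectedSpace_subtype_iff.mpr hKtd
  obtain ⟨P, hP, hAP, hPB⟩ := exists_clopen_of_closed_subset_open (X := K)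
    (hA.preimage continuous_subtype_val) (hB.preimage continuous_subtype_val).isOpen_compl
    (subset_compl_iff_disjoint_right.mpr (hAB.preimage _))
  have hPc : IsClosed ((↑) '' P : Set X) :=
    (hP.isClosed.isCompact.image continuous_subtype_val).isClosed
  have hQc : IsClosed ((↑) '' Pᶜ : Set X) :=
    (hP.compl.isClosed.isCompact.image continuous_subtype_val).isClosed
  have hdisj : Disjoint (A ∪ (↑) '' P) (B ∪ (↑) '' Pᶜ) := by
    refine disjoint_union_left.mpr
      ⟨disjoint_union_right.mpr ⟨hAB, ?_⟩, disjoint_union_right.mpr ⟨?_, ?_⟩⟩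
    · rintro _ hA' hP' x hx
      obtain ⟨k, hk, rfl⟩ := hP' hx
      exact hk (hAP (hA' hx))
    · rintro _ hP' hB' x hx
      obtain ⟨k, hk, rfl⟩ := hP' hx
      exact hPB hk (hB' hx)
    · exact disjoint_compl_right.image Subtype.val_injective.injOn (subset_univ _) (subset_univ _)
  obtain ⟨U, V, hU, hV, hAU, hBV, hUV⟩ :=
    exists_isOpen_disjoint_closure_of_isClosed (hA.union hPc) (hB.union hQc) hdisj
  refine ⟨U, V, hU, hV, subset_union_left.trans hAU, subset_union_left.trans hBV, ?_, hUV⟩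
  intro x hx
  by_cases hxP : (⟨x, hx⟩ : K) ∈ P
  · exact Or.inl (hAU (Or.inr ⟨_, hxP, rfl⟩))
  · exact Or.inr (hBV (Or.inr ⟨_, hxP, rfl⟩))

theorem exists_isClopen_of_isClosed_of_disjoint [T4Space X] [SigmaCompactSpace X]
    (htd : ∀ K : Set X, IsCompact K → IsTotallyDisconnected K) {A B : Set X}
    (hA : IsClosed A) (hB : IsClosed B) (hAB : Disjoint A B) :
    ∃ C : Set X, IsClopen C ∧ A ⊆ C ∧ Disjoint C B := by
  choose! U V hU hV hAU hBV hcov hUV using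
    fun (n : ℕ) (AB : Set X × Set X) (h : IsClosed AB.1 ∧ IsClosed AB.2 ∧ Disjoint AB.1 AB.2) ↦
      (isCompact_compactCovering X n).exists_isOpen_disjoint_closure_covering
        (htd _ (isCompact_compactCovering X n)) h.1 h.2.1 h.2.2
  -- passing to closures keeps the pairs closed and makes `U n`, `V n` increase
  let AB : ℕ → Set X × Set X :=
    fun n ↦ Nat.rec (A, B) (fun n ab ↦ (closure (U n ab), closure (V n ab))) n
  have hABn : ∀ n, IsClosed (AB n).1 ∧ IsClosed (AB n).2 ∧ Disjoint (AB n).1 (AB n).2 := by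
    intro n
    induction n with
    | zero => exact ⟨hA, hB, hAB⟩
    | succ n ih => exact ⟨isClosed_closure, isClosed_closure, hUV n _ ih⟩
  have hUmono : Monotone fun n ↦ U n (AB n) := monotone_nat_of_le_succ fun n ↦
    subset_closure.trans (hAU (n + 1) (AB (n + 1)) (hABn (n + 1)))
  have hVmono : Monotone fun n ↦ V n (AB n) := monotone_nat_of_le_succ fun n ↦
    subset_closure.trans (hBV (n + 1) (AB (n + 1)) (hABn (n + 1)))
  have hdisj : Disjoint (⋃ n, U n (AB n)) (⋃ n, V n (AB n)) := by
    refine disjoint_iUnion_left.mpr fun n ↦ disjoint_iUnion_right.mpr fun m ↦ ?_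
    exact ((hUV _ _ (hABn (max n m))).mono subset_closure subset_closure).mono
      (hUmono (le_max_left n m)) (hVmono (le_max_right n m))
  have hcover : (⋃ n, U n (AB n)) ∪ ⋃ n, V n (AB n) = univ := by
    refine eq_univ_of_forall fun x ↦ ?_
    obtain ⟨n, hn⟩ := mem_iUnion.mp (iUnion_compactCovering X ▸ mem_univ x)
    exact (hcov n _ (hABn n) hn).imp (subset_iUnion _ n ·) (subset_iUnion _ n ·)
  have hcompl : (⋃ n, U n (AB n))ᶜ = ⋃ n, V n (AB n) :=
    (IsCompl.of_eq hdisj.eq_bot hcover).compl_eq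
  refine ⟨⋃ n, U n (AB n), ⟨?_, isOpen_iUnion fun n ↦ hU n _ (hABn n)⟩,
    (hAU 0 _ (hABn 0)).trans (subset_iUnion (fun n ↦ U n (AB n)) 0), ?_⟩
  · exact isOpen_compl_iff.mp (hcompl ▸ isOpen_iUnion fun n ↦ hV n _ (hABn n))
  · exact hdisj.mono_right ((hBV 0 _ (hABn 0)).trans (subset_iUnion (fun n ↦ V n (AB n)) 0))

end ZeroDimensional

structure IsRectifiable {G : Type*} [TopologicalSpace G] (e : G) (p q : G × G → G) : Prop where
  continuous_p : Continuous p
  continuous_q : Continuous q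
  p_q : ∀ x y, p (x, q (x, y)) = y
  q_p : ∀ x y, q (x, p (x, y)) = y
  q_self : ∀ x, q (x, x) = e

def SeparatedByCompacta (G : Type*) [TopologicalSpace G] : Prop :=
  ∀ x y : G, x ≠ y → ∃ (F U V : Set G), IsCompact F ∧
    IsOpen U ∧ IsOpen V ∧ x ∈ U ∧ y ∈ V ∧ Disjoint U V ∧ U ∪ V = Fᶜ

namespace IsRectifiable

variable {G : Type*} [TopologicalSpace G] {e : G} {p q : G × G → G}

theorem p_e (h : IsRectifiable e p q) (x : G) : p (x, e) = x := by
  simpa only [h.q_self] using h.p_q x x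

def transl (h : IsRectifiable e p q) (z w : G) : G ≃ₜ G where
  toFun y := p (w, q (z, y))
  invFun y := p (z, q (w, y))
  left_inv y := by simp only [h.q_p, h.p_q]
  right_inv y := by simp only [h.q_p, h.p_q]
  continuous_toFun := by have := h.continuous_p; have := h.continuous_q; fun_prop
  continuous_invFun := by have := h.continuous_p; have := h.continuous_q; fun_prop

theorem transl_apply (h : IsRectifiable e p q) (z w y : G) :
    h.transl z w y = p (w, q (z, y)) :=
  rfl

theorem transl_self (h : IsRectifiable e p q) (z w : G) : h.transl z w z = w := by
  rw [transl_apply, h.q_self, h.p_e]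

theorem regularSpace (h : IsRectifiable e p q) : RegularSpace G := by
  refine .of_exists_mem_nhds_isClosed_subset fun z O hO ↦ ?_
  have hpO : p ⁻¹' O ∈ 𝓝 (z, e) :=
    h.continuous_p.continuousAt.preimage_mem_nhds (by rwa [h.p_e])
  obtain ⟨Vz, hVz, We, hWe, hVW⟩ := mem_nhds_prod_iff.mp hpO
  refine ⟨closure Vz, mem_of_superset hVz subset_closure, isClosed_closure, fun z' hz' ↦ ?_⟩
  have hqW : q ⁻¹' We ∈ 𝓝 (z', z') :=
    h.continuous_q.continuousAt.preimage_mem_nhds (by rwa [h.q_self])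
  obtain ⟨N₁, hN₁, N₂, hN₂, hN⟩ := mem_nhds_prod_iff.mp hqW
  obtain ⟨v, hvN, hvV⟩ := mem_closure_iff_nhds.mp hz' (N₁ ∩ N₂) (inter_mem hN₁ hN₂)
  -- `z' = p (v, q (v, z'))` with `v` near `z` and `q (v, z')` near `e`
  rw [← h.p_q v z']
  exact hVW ⟨hvV, hN ⟨hvN.1, mem_of_mem_nhds hN₂⟩⟩

theorem locallyCompactSpace_of_isCompact_mem_nhds [R1Space G] (h : IsRectifiable e p q)
    {K : Set G} {z : G} (hK : IsCompact K) (hKz : K ∈ 𝓝 z) : LocallyCompactSpace G := by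
  have : WeaklyLocallyCompactSpace G := ⟨fun w ↦ by
    refine ⟨h.transl z w '' K, hK.image (h.transl z w).continuous, ?_⟩
    have := image_mem_map (m := h.transl z w) hKz
    rwa [(h.transl z w).map_nhds_eq, h.transl_self] at this⟩
  infer_instance

theorem exists_isCompact_mem_nhds_of_isPreconnected (h : IsRectifiable e p q)
    (hsep : SeparatedByCompacta G) {C : Set G}
    (hC : IsCompact C) (hCc : IsPreconnected C) {c₀ c₁ : G} (h₀ : c₀ ∈ C) (h₁ : c₁ ∈ C)
    (hne : c₀ ≠ c₁) : ∃ K, IsCompact K ∧ K ∈ 𝓝 c₀ := by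
  obtain ⟨F, U, V, hF, hU, hV, hc₀U, hc₁V, hUV, hUVF⟩ := hsep c₀ c₁ hne
  refine ⟨(fun cf : G × G ↦ p (c₀, q cf)) '' C ×ˢ F, (hC.prod hF).image (by
    have := h.continuous_p; have := h.continuous_q; fun_prop),
    mem_of_superset (inter_mem (hU.mem_nhds hc₀U)
      ((h.transl c₀ c₁).continuous.continuousAt.preimage_mem_nhds
        (hV.mem_nhds (by rwa [h.transl_self])))) ?_⟩
  rintro g ⟨hgU, hgV⟩
  -- `D` is preconnected and joins `g ∈ U` to `transl c₀ c₁ g ∈ V`, so it meets `F`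
  set D := (fun c ↦ p (c, q (c₀, g))) '' C
  have hDc : IsPreconnected D := hCc.image _ (by
    have := h.continuous_p; have := h.continuous_q; fun_prop)
  obtain ⟨f, hfD, hfF⟩ : (D ∩ F).Nonempty := by
    by_contra hDF
    have hDUV : D ⊆ U ∪ V := hUVF ▸ fun d hd hdF ↦ hDF ⟨d, hd, hdF⟩
    obtain ⟨d, -, hdU, hdV⟩ := hDc U V hU hV hDUV ⟨g, ⟨c₀, h₀, h.p_q c₀ g⟩, hgU⟩
      ⟨_, ⟨c₁, h₁, rfl⟩, hgV⟩
    exact hUV.ne_of_mem hdU hdV rfl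
  obtain ⟨c, hc, rfl⟩ := hfD
  exact ⟨(c, _), ⟨hc, hfF⟩, by simp only [h.q_p, h.p_q]⟩

theorem isTotallyDisconnected_of_isCompact [T2Space G] (h : IsRectifiable e p q)
    (hsep : SeparatedByCompacta G) (hG : ¬ LocallyCompactSpace G) {K : Set G} (hK : IsCompact K) :
    IsTotallyDisconnected K := by
  intro t htK ht a ha b hb
  by_contra hab
  obtain ⟨L, hL, hLa⟩ := h.exists_isCompact_mem_nhds_of_isPreconnected hsep
    (hK.of_isClosed_subset isClosed_closure (closure_minimal htK hK.isClosed)) ht.closure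
    (subset_closure ha) (subset_closure hb) hab
  exact hG (h.locallyCompactSpace_of_isCompact_mem_nhds hL hLa)

end IsRectifiable

/-- If any two distinct points of a Hausdorff rectifiable space `G` can be
separated by a compactum, then either `G` is locally compact or every
σ-compact subspace of `G` is zero-dimensional. -/
theorem locallyCompact_or_sigmaCompact_zeroDim_of_separated_by_compacta
    {G : Type*} [TopologicalSpace G] [T2Space G] (e : G) (p q : G × G → G)
    (hp : Continuous p) (hq : Continuous q)
    (hpq : ∀ x y : G, p (x, q (x, y)) = y)
    (hqp : ∀ x y : G, q (x, p (x, y)) = y)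
    (hqe : ∀ x : G, q (x, x) = e)
    (hsep : ∀ x y : G, x ≠ y → ∃ (F U V : Set G), IsCompact F ∧
      IsOpen U ∧ IsOpen V ∧ x ∈ U ∧ y ∈ V ∧ Disjoint U V ∧ U ∪ V = Fᶜ) :
    LocallyCompactSpace G ∨
      ∀ S : Set G, IsSigmaCompact S →
        ∀ (x : S) (W : Set S), IsOpen W → x ∈ W →
          ∃ V : Set S, IsClopen V ∧ x ∈ V ∧ V ⊆ W := by
  have h : IsRectifiable e p q := ⟨hp, hq, hpq, hqp, hqe⟩
  have : RegularSpace G := h.regularSpace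
  refine or_iff_not_imp_left.mpr fun hG S hS x W hW hxW ↦ ?_
  have : SigmaCompactSpace S := isSigmaCompact_iff_sigmaCompactSpace.mp hS
  have htd (K : Set S) (hK : IsCompact K) : IsTotallyDisconnected K :=
    isTotallyDisconnected_of_image continuous_subtype_val.continuousOn Subtype.val_injective
      (h.isTotallyDisconnected_of_isCompact hsep hG (hK.image continuous_subtype_val))
  obtain ⟨V, hV, hxV, hVW⟩ := exists_isClopen_of_isClosed_of_disjoint htd isClosed_singleton
    hW.isClosed_compl (disjoint_singleton_left.mpr (not_not_intro hxW))
  exact ⟨V, hV, hxV rfl, fun y hy ↦ not_not.mp (disjoint_left.mp hVW hy)⟩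
end

section
/- Every Hausdorff rectifiable space with a bc-base is either locally compact or has every compact subspace zero-dimensional. -/
/-- Every Hausdorff rectifiable space with a bc-base is either locally compact
or every compact subspace of it is zero-dimensional. -/
theorem locallyCompact_or_compact_zeroDim_of_bcBase
    {G : Type*} [TopologicalSpace G] [T2Space G] (e : G) (p q : G × G → G)
    (hp : Continuous p) (hq : Continuous q)
    (hpq : ∀ x y : G, p (x, q (x, y)) = y)
    (hqp : ∀ x y : G, q (x, p (x, y)) = y)
    (hqe : ∀ x : G, q (x, x) = e)
    (𝓑 : Set (Set G)) (hbase : TopologicalSpace.IsTopologicalBasis 𝓑)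
    (hbc : ∀ U ∈ 𝓑, IsCompact (closure U \ U)) :
    LocallyCompactSpace G ∨
      ∀ S : Set G, IsCompact S →
        ∀ (x : S) (W : Set S), IsOpen W → x ∈ W →
          ∃ V : Set S, IsClopen V ∧ x ∈ V ∧ V ⊆ W := by
  classical
  -- basic algebra
  have hpxe : ∀ x : G, p (x, e) = x := fun x => by
    conv_lhs => rw [← hqe x]
    exact hpq x x
  -- normalized operations: `P e = id`, `Q e = id`
  set P : G → G → G := fun x y => p (x, q (e, y)) with hPdef
  set Q : G → G → G := fun x y => p (e, q (x, y)) with hQdef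
  have hPQ : ∀ x y : G, P x (Q x y) = y := by
    intro x y
    show p (x, q (e, p (e, q (x, y)))) = y
    rw [hqp e, hpq x]
  have hQP : ∀ x y : G, Q x (P x y) = y := by
    intro x y
    show p (e, q (x, p (x, q (e, y)))) = y
    rw [hqp x, hpq e]
  have hQe : ∀ y : G, Q e y = y := fun y => hpq e y
  have hPxe : ∀ x : G, P x e = x := by
    intro x
    show p (x, q (e, e)) = x
    rw [hqe e, hpxe]
  have hcontP : ∀ k : G, Continuous fun y => P k y := fun k =>
    hp.comp (continuous_const.prodMk (hq.comp (continuous_const.prodMk continuous_id)))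
  have hcontQ : ∀ k : G, Continuous fun y => Q k y := fun k =>
    hp.comp (continuous_const.prodMk (hq.comp (continuous_const.prodMk continuous_id)))
  by_cases hwlc : ∃ (x : G) (K : Set G), IsCompact K ∧ K ∈ nhds x
  · -- some point has a compact neighborhood: by homogeneity, locally compact
    left
    obtain ⟨x, K, hKc, hKx⟩ := hwlc
    haveI : WeaklyLocallyCompactSpace G := by
      refine ⟨fun b => ?_⟩
      let f : G ≃ₜ G :=
        { toFun := fun y => p (b, q (x, y))
          invFun := fun y => p (x, q (b, y))
          left_inv := fun y => by
            show p (x, q (b, p (b, q (x, y)))) = y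
            rw [hqp b, hpq x]
          right_inv := fun y => by
            show p (b, q (x, p (x, q (b, y)))) = y
            rw [hqp x, hpq b]
          continuous_toFun :=
            hp.comp (continuous_const.prodMk (hq.comp (continuous_const.prodMk continuous_id)))
          continuous_invFun :=
            hp.comp (continuous_const.prodMk (hq.comp (continuous_const.prodMk continuous_id))) }
      refine ⟨f '' K, hKc.image f.continuous, ?_⟩
      have hfx : f x = b := by
        show p (b, q (x, x)) = b
        rw [hqe x, hpxe]
      have : f '' K ∈ nhds (f x) := by
        rw [← f.map_nhds_eq x]
        exact Filter.image_mem_map hKx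
      rwa [hfx] at this
    exact WeaklyLocallyCompactSpace.locallyCompactSpace
  · -- no point has a compact neighborhood
    right
    push_neg at hwlc
    intro S hS x W hW hxW
    haveI : CompactSpace S := isCompact_iff_compactSpace.mp hS
    haveI : TotallyDisconnectedSpace S := by
      refine ⟨fun t _ ht => ?_⟩
      by_contra hns
      obtain ⟨a, hat, b, hbt, hab⟩ := Set.not_subsingleton_iff.mp hns
      -- a nontrivial compact connected subset of `G`
      set C : Set G := closure (Subtype.val '' t) with hCdef
      have hCpre : IsPreconnected C :=
        (ht.image _ continuous_subtype_val.continuousOn).closure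
      have hCS : C ⊆ S := by
        refine closure_minimal ?_ hS.isClosed
        rintro _ ⟨z, _, rfl⟩
        exact z.2
      have hCc : IsCompact C := hS.of_isClosed_subset isClosed_closure hCS
      have hvaC : (a : G) ∈ C := subset_closure ⟨a, hat, rfl⟩
      have hvbC : (b : G) ∈ C := subset_closure ⟨b, hbt, rfl⟩
      have hvab : (a : G) ≠ (b : G) := fun h => hab (Subtype.ext h)
      -- translate it so that it contains `e` and a second point `c`
      set K : Set G := (fun y => Q (a : G) y) '' C with hKdef
      have hKc : IsCompact K := hCc.image (hcontQ _)
      have hKpre : IsPreconnected K := hCpre.image _ (hcontQ _).continuousOn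
      have heK : e ∈ K := by
        refine ⟨(a : G), hvaC, ?_⟩
        show p (e, q ((a : G), (a : G))) = e
        rw [hqe, hpxe]
      set c : G := Q (a : G) (b : G) with hcdef
      have hcK : c ∈ K := ⟨(b : G), hvbC, rfl⟩
      have hce : c ≠ e := by
        intro h
        apply hvab
        have h2 := hPQ (a : G) (b : G)
        rw [← hcdef, h, hPxe] at h2
        exact h2
      -- a basic set around `e` whose closure misses `c`
      obtain ⟨U₀, V₀, hU₀o, hV₀o, heU₀, hcV₀, hdisj⟩ := t2_separation (Ne.symm hce)
      obtain ⟨U, hU𝓑, heU, hUU₀⟩ := hbase.exists_subset_of_mem_open heU₀ hU₀o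
      have hUo : IsOpen U := hbase.isOpen hU𝓑
      have hFc : IsCompact (closure U \ U) := hbc U hU𝓑
      have hccl : c ∉ closure U := by
        intro hc
        obtain ⟨z, hzV₀, hzU⟩ := mem_closure_iff.mp hc V₀ hV₀o hcV₀
        exact Set.disjoint_left.mp hdisj (hUU₀ hzU) hzV₀
      -- the compact set `K ⬝ ∂U`
      set A : Set G := (fun z : G × G => p (z.1, q (e, z.2))) '' (K ×ˢ (closure U \ U))
        with hAdef
      have hAc : IsCompact A := by
        refine (hKc.prod hFc).image ?_
        exact hp.comp (continuous_fst.prodMk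
          (hq.comp (continuous_const.prodMk continuous_snd)))
      -- the open set `K ⬝ U`
      set KU : Set G := ⋃ k ∈ K, (fun y => P k y) '' U with hKUdef
      have hKUo : IsOpen KU := by
        refine isOpen_biUnion fun k _ => ?_
        have hk : IsOpenMap fun y => P k y := by
          let f : G ≃ₜ G :=
            { toFun := fun y => P k y
              invFun := fun y => Q k y
              left_inv := hQP k
              right_inv := hPQ k
              continuous_toFun := hcontP k
              continuous_invFun := hcontQ k }
          exact f.isOpenMap
        exact hk U hUo
      have hcKU : c ∈ KU := Set.mem_biUnion hcK ⟨e, heU, hPxe c⟩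
      -- the key inclusion: `K ⬝ U \ closure U ⊆ A`
      have hOA : KU \ closure U ⊆ A := by
        rintro y ⟨hyKU, hycl⟩
        obtain ⟨k₀, hk₀K, hmem⟩ := Set.mem_iUnion₂.mp hyKU
        obtain ⟨u, huU, hyu⟩ := hmem
        set u₁ : Set G := (fun k => Q k y) ⁻¹' U with hu₁def
        set v₁ : Set G := (fun k => Q k y) ⁻¹' (closure U)ᶜ with hv₁def
        have hcont : Continuous fun k => Q k y :=
          hp.comp (continuous_const.prodMk
            (hq.comp (continuous_id.prodMk continuous_const)))
        have hu₁o : IsOpen u₁ := hUo.preimage hcont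
        have hv₁o : IsOpen v₁ := isClosed_closure.isOpen_compl.preimage hcont
        have hk₀u₁ : k₀ ∈ u₁ := by
          show Q k₀ y ∈ U
          rw [← hyu, hQP]
          exact huU
        have hev₁ : e ∈ v₁ := by
          show Q e y ∈ (closure U)ᶜ
          rw [hQe]
          exact hycl
        by_cases hcov : K ⊆ u₁ ∪ v₁
        · exfalso
          obtain ⟨z, -, hzu, hzv⟩ := hKpre u₁ v₁ hu₁o hv₁o hcov ⟨k₀, hk₀K, hk₀u₁⟩
            ⟨e, heK, hev₁⟩
          exact hzv (subset_closure hzu)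
        · rw [Set.not_subset] at hcov
          obtain ⟨k, hkK, hk⟩ := hcov
          rw [Set.mem_union] at hk
          push_neg at hk
          obtain ⟨hkU, hkcl⟩ := hk
          rw [Set.mem_preimage, Set.mem_compl_iff, not_not] at hkcl
          rw [Set.mem_preimage] at hkU
          exact ⟨(k, Q k y), ⟨hkK, hkcl, hkU⟩, hPQ k y⟩
      -- so `A` is a compact neighborhood of `c`: contradiction
      have hAnb : A ∈ nhds c :=
        mem_nhds_iff.mpr ⟨KU \ closure U, hOA, hKUo.sdiff isClosed_closure, hcKU, hccl⟩
      exact hwlc c A hAc hAnb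
    exact compact_exists_isClopen_in_isOpen hW hxW
end

section
/- Let F and K be nonempty compact subsets of a Hausdorff rectifiable space G and let P be a closed subset of G. If e ∈ K ⊆ p(F × K) and p(F × K) ∩ P = ∅, then there exists an open neighborhood U of e such that p(F × p(p(K × U) × U)) ∩ P = ∅, i.e., F·((K·U)·U) ∩ P = ∅. -/
/-- If `F`, `K` are nonempty compact subsets of a Hausdorff rectifiable space,
`P` is closed, `e ∈ K ⊆ F·K` and `(F·K) ∩ P = ∅`, then there is an open
neighborhood `U` of `e` with `F·((K·U)·U) ∩ P = ∅`. -/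
theorem exists_nhd_of_compact_disjoint_closed
    {G : Type*} [TopologicalSpace G] [T2Space G] (e : G) (p q : G × G → G)
    (hp : Continuous p) (hq : Continuous q)
    (hpq : ∀ x y : G, p (x, q (x, y)) = y)
    (hqp : ∀ x y : G, q (x, p (x, y)) = y)
    (hqe : ∀ x : G, q (x, x) = e)
    (F K P : Set G) (hF : IsCompact F) (hK : IsCompact K)
    (hFne : F.Nonempty) (hKne : K.Nonempty) (hP : IsClosed P)
    (heK : e ∈ K) (hKFK : K ⊆ p '' (F ×ˢ K))
    (hdisj : p '' (F ×ˢ K) ∩ P = ∅) :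
    ∃ U : Set G, IsOpen U ∧ e ∈ U ∧
      p '' (F ×ˢ (p '' ((p '' (K ×ˢ U)) ×ˢ U))) ∩ P = ∅ := by
  have hpe : ∀ x : G, p (x, e) = x := fun x => by
    have := hpq x x; rwa [hqe x] at this
  set h : (G × G) × (G × G) → G := fun z => p (z.1.1, p (p (z.1.2, z.2.1), z.2.2)) with hh
  have hhc : Continuous h := by
    apply hp.comp
    exact (continuous_fst.comp continuous_fst).prodMk
      (hp.comp (((hp.comp ((continuous_snd.comp continuous_fst).prodMk
        (continuous_fst.comp continuous_snd)))).prodMk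
        (continuous_snd.comp continuous_snd)))
  have hopen : IsOpen (h ⁻¹' Pᶜ) := hP.isOpen_compl.preimage hhc
  have hsub : (F ×ˢ K) ×ˢ ({(e, e)} : Set (G × G)) ⊆ h ⁻¹' Pᶜ := by
    rintro ⟨⟨x, k⟩, u, v⟩ ⟨⟨hx, hk⟩, huv⟩
    simp only [Set.mem_singleton_iff, Prod.mk.injEq] at huv
    obtain ⟨rfl, rfl⟩ := huv
    simp only [Set.mem_preimage, Set.mem_compl_iff, hh, hpe]
    intro hmem
    have : p (x, k) ∈ p '' (F ×ˢ K) ∩ P :=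
      ⟨⟨(x, k), ⟨hx, hk⟩, rfl⟩, hmem⟩
    rw [hdisj] at this; exact this
  obtain ⟨u, v, hu, hv, hFKu, hev, huv⟩ :=
    generalized_tube_lemma (hF.prod hK) isCompact_singleton hopen hsub
  have hev' : (e, e) ∈ v := hev rfl
  obtain ⟨U₁, U₂, hU₁, hU₂, heU₁, heU₂, hU₁₂⟩ := isOpen_prod_iff.mp hv e e hev'
  refine ⟨U₁ ∩ U₂, hU₁.inter hU₂, ⟨heU₁, heU₂⟩, ?_⟩
  ext g
  simp only [Set.mem_inter_iff, Set.mem_empty_iff_false, iff_false, not_and]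
  rintro ⟨⟨x, w⟩, ⟨hx, ⟨⟨z, vv⟩, ⟨⟨⟨k, uu⟩, ⟨hk, hu1, hu2⟩, rfl⟩, hv1, hv2⟩, rfl⟩⟩, rfl⟩
  have : (((x, k), (uu, vv)) : (G × G) × G × G) ∈ u ×ˢ v :=
    ⟨hFKu ⟨hx, hk⟩, hU₁₂ ⟨hu1, hv2⟩⟩
  exact huv this
end

section
/- Let G be a rectifiable space, A ⊆ G, and V an open neighborhood of the right neutral element e of G. Then the closure of A in G is contained in A·V = p(A × V). -/
/-- In a rectifiable space, if `V` is an open neighborhood of `e`, then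
`closure A ⊆ A·V`. -/
theorem closure_subset_mul_nhd
    {G : Type*} [TopologicalSpace G] (e : G) (p q : G × G → G)
    (hp : Continuous p) (hq : Continuous q)
    (hpq : ∀ x y : G, p (x, q (x, y)) = y)
    (hqp : ∀ x y : G, q (x, p (x, y)) = y)
    (hqe : ∀ x : G, q (x, x) = e)
    (A V : Set G) (hV : IsOpen V) (heV : e ∈ V) :
    closure A ⊆ p '' (A ×ˢ V) := by
  intro x hx
  have hU : IsOpen {a : G | q (a, x) ∈ V} :=
    hV.preimage (hq.comp (Continuous.prodMk_left x))
  have hxU : x ∈ {a : G | q (a, x) ∈ V} := by simp [hqe x, heV]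
  obtain ⟨a, haU, haA⟩ :=
    (mem_closure_iff.mp hx) _ hU hxU
  exact ⟨(a, q (a, x)), ⟨haA, haU⟩, hpq a x⟩
end
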